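/- Fix n ≥ 2, A ∈ ℂ^{n×n}, ε > 0, λ ∈ ℂ, and E ∈ ℂ^{n×n} with ‖E‖_F < 1. Let x, y ∈ ℂ^n be unit vectors with (A+εE)x = λx, y^H(A+εE) = λ y^H, and y^H x ≠ 0. Then there exists α ∈ ℝ such that the matrix E_α := E + α(I − x y^H/(y^H x)) satisfies ‖E_α‖_F = 1, and moreover x and y remain right and left eigenvectors of A+εE_α with the same eigenvalue λ, i.e. (A+εE_α)x = λx and y^H(A+εE_α) = λ y^H. -/

import Mathlib

open Matrix

/-- Frobenius inner product `⟨A,B⟩ = trace(Aᴴ B)`. -/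
noncomputable def frobInner {n : ℕ} (A B : Matrix (Fin n) (Fin n) ℂ) : ℂ :=
  (Aᴴ * B).trace

/-- Frobenius norm `‖A‖_F = √⟨A,A⟩`. -/
noncomputable def frobNorm {n : ℕ} (A : Matrix (Fin n) (Fin n) ℂ) : ℝ :=
  Real.sqrt (frobInner A A).re

/-!
Let `P = I - x yᴴ / (yᴴ x)`. Since `P x = 0` and `yᴴ P = 0`, adding any multiple of `P` to `E`
keeps `x` and `y` right and left eigenvectors of `A + εE` for `λ`. Along the line `E + αP` the
squared Frobenius norm is the real quadratic `‖E‖² + 2α Re⟨E,P⟩ + α²‖P‖²`; it is `< 1` at `α = 0`,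
and its leading coefficient is positive because `trace P = n - 1 ≠ 0`, so it takes the value `1`.
-/

section ObliqueProjection

variable {K ι : Type*} [Field K] [Fintype ι] [DecidableEq ι]

def obliqueProj (u v : ι → K) : Matrix ι ι K :=
  1 - (v ⬝ᵥ u)⁻¹ • vecMulVec u v

variable {u v : ι → K}

theorem obliqueProj_mulVec (h : v ⬝ᵥ u ≠ 0) : obliqueProj u v *ᵥ u = 0 := by
  rw [obliqueProj, sub_mulVec, one_mulVec, smul_mulVec, vecMulVec_mulVec, op_smul_eq_smul,
    smul_smul, inv_mul_cancel₀ h, one_smul, sub_self]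

theorem vecMul_obliqueProj (h : v ⬝ᵥ u ≠ 0) : v ᵥ* obliqueProj u v = 0 := by
  rw [obliqueProj, vecMul_sub, vecMul_one, vecMul_smul, vecMul_vecMulVec,
    smul_smul, inv_mul_cancel₀ h, one_smul, sub_self]

theorem trace_obliqueProj (h : v ⬝ᵥ u ≠ 0) :
    (obliqueProj u v).trace = Fintype.card ι - 1 := by
  rw [obliqueProj, trace_sub, trace_one, trace_smul, trace_vecMulVec, dotProduct_comm u,
    smul_eq_mul, inv_mul_cancel₀ h]

theorem obliqueProj_ne_zero [CharZero K] (hι : 1 < Fintype.card ι) (h : v ⬝ᵥ u ≠ 0) :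
    obliqueProj u v ≠ 0 := by
  intro h0
  have htr := trace_obliqueProj h
  rw [h0, trace_zero, eq_comm, sub_eq_zero] at htr
  exact hι.ne' (mod_cast htr)

end ObliqueProjection

section Frobenius

open scoped ComplexOrder

variable {n : ℕ}

theorem frobInner_self_nonneg (M : Matrix (Fin n) (Fin n) ℂ) : 0 ≤ frobInner M M :=
  (posSemidef_conjTranspose_mul_self M).trace_nonneg

theorem frobInner_self_re_pos {M : Matrix (Fin n) (Fin n) ℂ} (hM : M ≠ 0) :
    0 < (frobInner M M).re := by
  have hne : frobInner M M ≠ 0 := fun h => hM (trace_conjTranspose_mul_self_eq_zero_iff.mp h)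
  exact (Complex.pos_iff.mp (lt_of_le_of_ne (frobInner_self_nonneg M) hne.symm)).1

theorem frobInner_conj_symm (A B : Matrix (Fin n) (Fin n) ℂ) :
    frobInner B A = star (frobInner A B) := by
  rw [frobInner, frobInner, ← trace_conjTranspose, conjTranspose_mul, conjTranspose_conjTranspose]

theorem frobInner_add_smul_self_re (E P : Matrix (Fin n) (Fin n) ℂ) (α : ℝ) :
    (frobInner (E + (α : ℂ) • P) (E + (α : ℂ) • P)).re
      = (frobInner E E).re + 2 * α * (frobInner E P).re + α ^ 2 * (frobInner P P).re := by
  have hswap := frobInner_conj_symm E P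
  simp only [frobInner] at hswap ⊢
  simp only [conjTranspose_add, conjTranspose_smul, add_mul, mul_add, trace_add, trace_smul,
    Matrix.smul_mul, Matrix.mul_smul, smul_smul, hswap, Complex.star_def, Complex.conj_ofReal,
    smul_eq_mul, Complex.add_re, Complex.re_ofReal_mul, Complex.conj_re]
  rw [← Complex.ofReal_mul, Complex.re_ofReal_mul]
  ring

end Frobenius

theorem exists_add_two_mul_add_sq_mul_eq {e b p t : ℝ} (het : e ≤ t) (hp : 0 < p) :
    ∃ α : ℝ, e + 2 * α * b + α ^ 2 * p = t := by
  -- the larger root of `p α² + 2 b α + (e - t)`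
  set s := Real.sqrt (b ^ 2 + p * (t - e))
  have hs : s ^ 2 = b ^ 2 + p * (t - e) := Real.sq_sqrt (by nlinarith)
  refine ⟨(s - b) / p, ?_⟩
  field_simp
  nlinarith

theorem stmt15_general {n : ℕ} (hn : 2 ≤ n) (A : Matrix (Fin n) (Fin n) ℂ) (ε : ℝ)
    (lam : ℂ) (E : Matrix (Fin n) (Fin n) ℂ) (hEnorm : frobNorm E < 1)
    (x y : Fin n → ℂ)
    (heig : (A + (ε : ℂ) • E) *ᵥ x = lam • x)
    (hleig : star y ᵥ* (A + (ε : ℂ) • E) = lam • star y)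
    (hyx : star y ⬝ᵥ x ≠ 0) :
    ∃ α : ℝ,
      frobNorm (E + (α : ℂ) • (1 - (star y ⬝ᵥ x)⁻¹ • vecMulVec x (star y))) = 1 ∧
      (A + (ε : ℂ) • (E + (α : ℂ) • (1 - (star y ⬝ᵥ x)⁻¹ • vecMulVec x (star y)))) *ᵥ x
        = lam • x ∧
      star y ᵥ* (A + (ε : ℂ) • (E + (α : ℂ) • (1 - (star y ⬝ᵥ x)⁻¹ • vecMulVec x (star y))))
        = lam • star y := by
  change ∃ α : ℝ, frobNorm (E + (α : ℂ) • obliqueProj x (star y)) = 1 ∧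
    (A + (ε : ℂ) • (E + (α : ℂ) • obliqueProj x (star y))) *ᵥ x = lam • x ∧
    star y ᵥ* (A + (ε : ℂ) • (E + (α : ℂ) • obliqueProj x (star y))) = lam • star y
  have hP : 0 < (frobInner (obliqueProj x (star y)) (obliqueProj x (star y))).re :=
    frobInner_self_re_pos (obliqueProj_ne_zero (by rw [Fintype.card_fin]; omega) hyx)
  have hE : (frobInner E E).re < 1 := by
    simpa using (Real.sqrt_lt' one_pos).mp hEnorm
  obtain ⟨α, hα⟩ := exists_add_two_mul_add_sq_mul_eq (b := (frobInner E (obliqueProj x (star y))).re)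
    hE.le hP
  have hsplit : A + (ε : ℂ) • (E + (α : ℂ) • obliqueProj x (star y))
      = (A + (ε : ℂ) • E) + ((ε : ℂ) * α) • obliqueProj x (star y) := by
    rw [smul_add, smul_smul, add_assoc]
  refine ⟨α, ?_, ?_, ?_⟩
  · rw [frobNorm, frobInner_add_smul_self_re, hα, Real.sqrt_one]
  · rw [hsplit, add_mulVec, heig, smul_mulVec, obliqueProj_mulVec hyx, smul_zero, add_zero]
  · rw [hsplit, vecMul_add, hleig, vecMul_smul, vecMul_obliqueProj hyx, smul_zero, add_zero]

theorem stmt15 {n : ℕ} (hn : 2 ≤ n) (A : Matrix (Fin n) (Fin n) ℂ) (ε : ℝ) (hε : 0 < ε)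
    (lam : ℂ) (E : Matrix (Fin n) (Fin n) ℂ) (hEnorm : frobNorm E < 1)
    (x y : Fin n → ℂ)
    (hxnorm : star x ⬝ᵥ x = 1) (hynorm : star y ⬝ᵥ y = 1)
    (heig : (A + (ε : ℂ) • E) *ᵥ x = lam • x)
    (hleig : star y ᵥ* (A + (ε : ℂ) • E) = lam • star y)
    (hyx : star y ⬝ᵥ x ≠ 0) :
    ∃ α : ℝ,
      frobNorm (E + (α : ℂ) • (1 - (star y ⬝ᵥ x)⁻¹ • vecMulVec x (star y))) = 1 ∧
      (A + (ε : ℂ) • (E + (α : ℂ) • (1 - (star y ⬝ᵥ x)⁻¹ • vecMulVec x (star y)))) *ᵥ x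
        = lam • x ∧
      star y ᵥ* (A + (ε : ℂ) • (E + (α : ℂ) • (1 - (star y ⬝ᵥ x)⁻¹ • vecMulVec x (star y))))
        = lam • star y :=
  stmt15_general hn A ε lam E hEnorm x y heig hleig hyx
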